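/- Let X and Y be finite sets, let W : X × Y → [0,1] be a channel (for each x ∈ X, Σ_{y∈Y} W(y|x) = 1), fix R > 0, and define γ(Q_X, z) = Σ_{x∈X} Σ_{y∈Y} Q_X(x)·min(W(y|x), z_y) − e^{−R}·Σ_{y∈Y} z_y. Let Q_X be a probability mass function on X and z* ∈ [0,1]^Y. Then z* attains the maximum of γ(Q_X, ·) over [0,1]^Y if and only if for every y ∈ Y: Q_X({x : W(y|x) > z*_y}) ≤ e^{−R} ≤ Q_X({x : W(y|x) ≥ z*_y}). -/
import Mathlib


open Finset
open scoped Classical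

/-- `P` is a probability mass function on the finite type `Ω`. -/
def IsPMF {Ω : Type*} [Fintype Ω] (P : Ω → ℝ) : Prop :=
  (∀ w, 0 ≤ P w) ∧ ∑ w, P w = 1

/-- The functional `γ(Q_X, z)` of the paper; `W x y` denotes `W(y|x)`. -/
noncomputable def gammaFn {X Y : Type*} [Fintype X] [Fintype Y]
    (W : X → Y → ℝ) (R : ℝ) (Q : X → ℝ) (z : Y → ℝ) : ℝ :=
  (∑ x, ∑ y, Q x * min (W x y) (z y)) - Real.exp (-R) * ∑ y, z y

/- Auxiliary lemmas -/

section Aux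
variable {X Y : Type*} [Fintype X] [Fintype Y]

-- general upper bound
lemma sum_min_diff_le (v : X → ℝ) (Q : X → ℝ)
    (hQ : ∀ x, 0 ≤ Q x) {s t : ℝ} (hst : s ≤ t) :
    ∑ x, Q x * (min (v x) t - min (v x) s) ≤
      (t - s) * ∑ x ∈ univ.filter (fun x => s < v x), Q x := by
  classical
  rw [Finset.sum_filter, Finset.mul_sum]
  apply Finset.sum_le_sum
  intro x _
  split_ifs with h
  · have h1 : min (v x) s = s := min_eq_right h.le
    have h2 : min (v x) t ≤ t := min_le_right _ _
    nlinarith [hQ x]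
  · push_neg at h
    have h1 : min (v x) s = v x := min_eq_left h
    have h2 : min (v x) t = v x := min_eq_left (h.trans hst)
    simp [h1, h2]

-- general lower bound
lemma sum_min_diff_ge (v : X → ℝ) (Q : X → ℝ)
    (hQ : ∀ x, 0 ≤ Q x) {s t : ℝ} (hst : s ≤ t) :
    (t - s) * ∑ x ∈ univ.filter (fun x => t ≤ v x), Q x ≤
      ∑ x, Q x * (min (v x) t - min (v x) s) := by
  classical
  rw [Finset.sum_filter, Finset.mul_sum]
  apply Finset.sum_le_sum
  intro x _
  split_ifs with h
  · have h1 : min (v x) t = t := min_eq_right h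
    have h2 : min (v x) s = s := min_eq_right (hst.trans h)
    simp [h1, h2, mul_comm]
  · have h2 : min (v x) s ≤ min (v x) t := min_le_min le_rfl hst
    nlinarith [hQ x]

-- special lower bound: when nothing of v lies in (s, t)
lemma sum_min_diff_ge' (v : X → ℝ) (Q : X → ℝ)
    (hQ : ∀ x, 0 ≤ Q x) {s t : ℝ} (hst : s ≤ t) (h : ∀ x, s < v x → t ≤ v x) :
    (t - s) * ∑ x ∈ univ.filter (fun x => s < v x), Q x ≤
      ∑ x, Q x * (min (v x) t - min (v x) s) := by
  classical
  rw [Finset.sum_filter, Finset.mul_sum]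
  apply Finset.sum_le_sum
  intro x _
  split_ifs with hx
  · have h1 : min (v x) t = t := min_eq_right (h x hx)
    have h2 : min (v x) s = s := min_eq_right hx.le
    simp [h1, h2, mul_comm]
  · push_neg at hx
    have h1 : min (v x) s = v x := min_eq_left hx
    have h2 : min (v x) t = v x := min_eq_left (hx.trans hst)
    simp [h1, h2]

-- special upper bound: when nothing of v lies in (t, s)
lemma sum_min_diff_le' (v : X → ℝ) (Q : X → ℝ)
    (hQ : ∀ x, 0 ≤ Q x) {s t : ℝ} (hts : t ≤ s) (h : ∀ x, v x < s → v x ≤ t) :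
    ∑ x, Q x * (min (v x) s - min (v x) t) ≤
      (s - t) * ∑ x ∈ univ.filter (fun x => s ≤ v x), Q x := by
  classical
  rw [Finset.sum_filter, Finset.mul_sum]
  apply Finset.sum_le_sum
  intro x _
  split_ifs with hx
  · have h1 : min (v x) s = s := min_eq_right hx
    have h2 : min (v x) t = t := min_eq_right (hts.trans hx)
    simp [h1, h2, mul_comm]
  · push_neg at hx
    have h1 : min (v x) s = v x := min_eq_left hx.le
    have h2 : min (v x) t = v x := min_eq_left (h x hx)
    simp [h1, h2]

/-- the per-coordinate objective -/
noncomputable def gOne (W : X → Y → ℝ) (R : ℝ) (Q : X → ℝ) (y : Y) (t : ℝ) : ℝ :=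
  (∑ x, Q x * min (W x y) t) - Real.exp (-R) * t

lemma gamma_eq (W : X → Y → ℝ) (R : ℝ) (Q : X → ℝ) (z : Y → ℝ) :
    gammaFn W R Q z = ∑ y, gOne W R Q y (z y) := by
  unfold gammaFn gOne
  rw [Finset.sum_comm, Finset.sum_sub_distrib, Finset.mul_sum]

lemma gOne_sub (W : X → Y → ℝ) (R : ℝ) (Q : X → ℝ) (y : Y) (a b : ℝ) :
    gOne W R Q y a - gOne W R Q y b =
      (∑ x, Q x * (min (W x y) a - min (W x y) b)) - Real.exp (-R) * (a - b) := by
  unfold gOne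
  simp only [mul_sub, Finset.sum_sub_distrib]
  ring

end Aux

theorem stmt_9 {X Y : Type*} [Fintype X] [Fintype Y] (W : X → Y → ℝ)
    (hW : ∀ x y, W x y ∈ Set.Icc (0:ℝ) 1) (hWsum : ∀ x, ∑ y, W x y = 1)
    (R : ℝ) (hR : 0 < R)
    (Qx : X → ℝ) (hQx : IsPMF Qx)
    (zs : Y → ℝ) (hzs : ∀ y, zs y ∈ Set.Icc (0:ℝ) 1) :
    (∀ z : Y → ℝ, (∀ y, z y ∈ Set.Icc (0:ℝ) 1) →
        gammaFn W R Qx z ≤ gammaFn W R Qx zs) ↔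
      (∀ y : Y,
        (∑ x ∈ univ.filter (fun x => zs y < W x y), Qx x) ≤ Real.exp (-R) ∧
          Real.exp (-R) ≤ ∑ x ∈ univ.filter (fun x => zs y ≤ W x y), Qx x) := by
  classical
  obtain ⟨hQ0, hQ1⟩ := hQx
  have hE : 0 < Real.exp (-R) := Real.exp_pos _
  have hE1 : Real.exp (-R) < 1 := by
    calc Real.exp (-R) < Real.exp 0 := Real.exp_lt_exp.mpr (by linarith)
    _ = 1 := Real.exp_zero
  constructor
  · intro hmax y
    have hs0 : 0 ≤ zs y := (hzs y).1
    have hs1 : zs y ≤ 1 := (hzs y).2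
    -- any feasible coordinate perturbation at y does not increase gOne
    have hstep : ∀ t : ℝ, 0 ≤ t → t ≤ 1 →
        gOne W R Qx y t ≤ gOne W R Qx y (zs y) := by
      intro t ht0 ht1
      have hfeas : ∀ y', Function.update zs y t y' ∈ Set.Icc (0:ℝ) 1 := by
        intro y'
        by_cases h : y' = y
        · subst h; simp [ht0, ht1]
        · simpa [Function.update_of_ne h] using hzs y'
      have hle := hmax _ hfeas
      rw [gamma_eq, gamma_eq] at hle
      have hsum : (∑ y', gOne W R Qx y' (Function.update zs y t y')) -
          (∑ y', gOne W R Qx y' (zs y')) =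
          gOne W R Qx y t - gOne W R Qx y (zs y) := by
        rw [← Finset.sum_sub_distrib]
        rw [Finset.sum_eq_single y]
        · simp
        · intro y' _ hy'; simp [Function.update_of_ne hy']
        · simp
      linarith
    constructor
    · -- Q({zs y < W}) ≤ exp(-R)
      rcases (univ.filter (fun x => zs y < W x y)).eq_empty_or_nonempty with hne | hne
      · rw [hne]; simpa using hE.le
      · obtain ⟨x0, hx0⟩ := hne
        have hne' : (univ.filter (fun x => zs y < W x y)).Nonempty := ⟨x0, hx0⟩
        set t := (univ.filter (fun x => zs y < W x y)).inf' hne' (fun x => W x y) with htdef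
        have hst : zs y < t := by
          rw [Finset.lt_inf'_iff]
          intro x hx
          exact (Finset.mem_filter.mp hx).2
        have ht1 : t ≤ 1 := le_trans (Finset.inf'_le (fun x => W x y) hx0) (hW x0 y).2
        have hprop : ∀ x, zs y < W x y → t ≤ W x y := fun x hx =>
          Finset.inf'_le (fun x => W x y) (Finset.mem_filter.mpr ⟨Finset.mem_univ x, hx⟩)
        have h1 := hstep t (le_trans hs0 hst.le) ht1
        have h2 := sum_min_diff_ge' (fun x => W x y) Qx hQ0 hst.le hprop
        have h3 : gOne W R Qx y t - gOne W R Qx y (zs y) ≤ 0 := by linarith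
        rw [gOne_sub] at h3
        nlinarith [h2, h3, hst]
    · -- exp(-R) ≤ Q({zs y ≤ W})
      have main2 : ∀ t : ℝ, 0 ≤ t → t < zs y → (∀ x, W x y < zs y → W x y ≤ t) →
          Real.exp (-R) ≤ ∑ x ∈ univ.filter (fun x => zs y ≤ W x y), Qx x := by
        intro t ht0 hts hprop
        have h1 := hstep t ht0 (le_trans hts.le hs1)
        have h2 := sum_min_diff_le' (fun x => W x y) Qx hQ0 hts.le hprop
        have h3 : gOne W R Qx y t - gOne W R Qx y (zs y) ≤ 0 := by linarith
        rw [gOne_sub] at h3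
        have h4 : ∑ x, Qx x * (min (W x y) (zs y) - min (W x y) t) =
            -(∑ x, Qx x * (min (W x y) t - min (W x y) (zs y))) := by
          rw [← Finset.sum_neg_distrib]
          congr 1; funext x; ring
        rw [h4] at h2
        nlinarith [h2, h3, hts]
      by_cases hs0' : 0 < zs y
      · rcases (univ.filter (fun x => W x y < zs y)).eq_empty_or_nonempty with hne | hne
        · refine main2 0 le_rfl hs0' ?_
          intro x hx
          exfalso
          have : x ∈ univ.filter (fun x => W x y < zs y) :=
            Finset.mem_filter.mpr ⟨Finset.mem_univ _, hx⟩
          simp [hne] at this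
        · obtain ⟨x0, hx0⟩ := hne
          have hne' : (univ.filter (fun x => W x y < zs y)).Nonempty := ⟨x0, hx0⟩
          set t := (univ.filter (fun x => W x y < zs y)).sup' hne' (fun x => W x y) with htdef
          have hts : t < zs y := by
            rw [Finset.sup'_lt_iff]
            intro x hx
            exact (Finset.mem_filter.mp hx).2
          have ht0 : 0 ≤ t := le_trans (hW x0 y).1 (Finset.le_sup' (fun x => W x y) hx0)
          exact main2 t ht0 hts fun x hx =>
            Finset.le_sup' (fun x => W x y) (Finset.mem_filter.mpr ⟨Finset.mem_univ x, hx⟩)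
      · -- zs y = 0, so the filter is everything and the sum is 1
        have hs0'' : zs y = 0 := le_antisymm (not_lt.mp hs0') hs0
        have : (univ.filter (fun x => zs y ≤ W x y)) = univ := by
          apply Finset.filter_true_of_mem
          intro x _
          rw [hs0'']
          exact (hW x y).1
        rw [this, hQ1]
        exact hE1.le
  · intro hcond z hz
    rw [gamma_eq, gamma_eq]
    apply Finset.sum_le_sum
    intro y _
    obtain ⟨hc1, hc2⟩ := hcond y
    rcases le_total (z y) (zs y) with h | h
    · have h2 := sum_min_diff_ge (fun x => W x y) Qx hQ0 h
      have h3 := gOne_sub W R Qx y (zs y) (z y)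
      have h5 : (zs y - z y) * Real.exp (-R) ≤
          (zs y - z y) * ∑ x ∈ univ.filter (fun x => zs y ≤ W x y), Qx x :=
        mul_le_mul_of_nonneg_left hc2 (by linarith)
      linarith
    · have h2 := sum_min_diff_le (fun x => W x y) Qx hQ0 h
      have h3 := gOne_sub W R Qx y (z y) (zs y)
      have h5 : (z y - zs y) * (∑ x ∈ univ.filter (fun x => zs y < W x y), Qx x) ≤
          (z y - zs y) * Real.exp (-R) :=
        mul_le_mul_of_nonneg_left hc1 (by linarith)
      linarith
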